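/- For every x = (x₁, …, x_n) ∈ ℝ₊ⁿ, the random variable L̃(x) := T(χ_{∏_{j=1}^n [0,x_j]}) is infinitely divisible with Lévy exponent (∏_{j=1}^n x_j)·Ψ: its characteristic function is ∫_Ω e^{i u L̃(x)(ω)} P(dω) = exp( (∏_{j=1}^n x_j) · ∫_ℝ (e^{iuz} − 1 − iuz) ν(dz) ) for every u ∈ ℝ. -/

import Mathlib

open MeasureTheory Complex

noncomputable section

/-- The space ℝⁿ. -/
abbrev En (n : ℕ) := EuclideanSpace ℝ (Fin n)

/-- The white noise probability space Ω = 𝒮'(ℝⁿ), the space of tempered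
distributions (the continuous dual of the Schwartz space), with the weak* topology. -/
abbrev WNSpace (n : ℕ) := WeakDual ℝ (SchwartzMap (En n) ℝ)

/-- The Borel σ-algebra on Ω. -/
instance (n : ℕ) : MeasurableSpace (WNSpace n) := borel _

/-- The Lévy exponent Ψ(w) = ∫ (e^{iwz} − 1 − iwz) ν(dz). -/
def levyExponent (ν : Measure ℝ) (w : ℝ) : ℂ :=
  ∫ z : ℝ, (Complex.exp (Complex.I * w * z) - 1 - Complex.I * w * z) ∂ν

/-!
Replace the indicator `χ` by an arbitrary `f ∈ L²(ℝⁿ)`. Both sides of the identity are then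
continuous in `f`: the left one because `|e^{ia} - e^{ib}| ≤ |a - b|` and `T` is bounded; the right
one because the integrand of `Ψ` has `w`-derivative bounded by `|w| z²`, so that
`|Ψ a - Ψ b| ≤ M (|a| + |b|) |a - b|`, which Cauchy–Schwarz turns into local Lipschitz continuity
of `f ↦ ∫ Ψ ∘ f` on `L²`. By the Bochner–Minlos identity the two sides agree on Schwartz functions,
which are dense in `L²`, hence they agree at `χ`; there `Ψ 0 = 0` makes the exponent
`vol(box) · Ψ u`.
-/

section Auxiliary

variable {α : Type*} [MeasurableSpace α] {μ : Measure α}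

lemma continuous_of_norm_sub_le_mul_add_norm {E F : Type*} [SeminormedAddCommGroup E]
    [SeminormedAddCommGroup F] {f : E → F} (C : ℝ)
    (h : ∀ a b, ‖f a - f b‖ ≤ C * (‖a‖ + ‖b‖) * ‖a - b‖) : Continuous f := by
  refine continuous_iff_continuousAt.2 fun b => continuousAt_of_locally_lipschitz one_pos
    (|C| * (2 * ‖b‖ + 1)) fun a hab => ?_
  rw [dist_eq_norm, dist_eq_norm] at *
  have ha : ‖a‖ ≤ ‖b‖ + 1 := by linarith [norm_sub_norm_le a b]
  calc ‖f a - f b‖ ≤ C * (‖a‖ + ‖b‖) * ‖a - b‖ := h a b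
    _ ≤ |C| * (‖a‖ + ‖b‖) * ‖a - b‖ := by gcongr; exact le_abs_self C
    _ ≤ |C| * (2 * ‖b‖ + 1) * ‖a - b‖ := by gcongr |C| * ?_ * _; linarith

lemma norm_exp_I_mul_sub_exp_I_mul_le (s t : ℝ) : ‖exp (I * s) - exp (I * t)‖ ≤ |s - t| := by
  calc ‖exp (I * s) - exp (I * t)‖ = ‖exp (I * t) * (exp (I * ↑(s - t)) - 1)‖ := by
        rw [mul_sub, ← exp_add]; push_cast; ring_nf
    _ ≤ |s - t| := by
        rw [norm_mul, norm_exp_I_mul_ofReal, one_mul]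
        exact Real.norm_exp_I_mul_ofReal_sub_one_le

lemma integrable_exp_I_mul [IsFiniteMeasure μ] {f : α → ℝ}
    (hf : AEStronglyMeasurable f μ) : Integrable (fun a => exp (I * f a)) μ :=
  (integrable_const 1).mono' (by fun_prop) (.of_forall fun a => (norm_exp_I_mul_ofReal _).le)

end Auxiliary

namespace MeasureTheory.Lp

variable {α E : Type*} [MeasurableSpace α] {μ : Measure α} [NormedAddCommGroup E]

lemma norm_two_eq_integral (f : Lp E 2 μ) :
    ‖f‖ = (∫ a, ‖f a‖ ^ (2 : ℝ) ∂μ) ^ (1 / (2 : ℝ)) := by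
  rw [Lp.norm_def, (Lp.memLp f).eLpNorm_eq_integral_rpow_norm two_ne_zero ENNReal.ofNat_ne_top,
    ENNReal.toReal_ofReal (by positivity)]
  norm_num

lemma integral_norm_mul_norm_le (f g : Lp E 2 μ) :
    ∫ a, ‖f a‖ * ‖g a‖ ∂μ ≤ ‖f‖ * ‖g‖ := by
  have := integral_mul_norm_le_Lp_mul_Lq Real.HolderConjugate.two_two
    (by simpa using Lp.memLp f) (by simpa using Lp.memLp g)
  rwa [← norm_two_eq_integral, ← norm_two_eq_integral] at this

lemma integral_norm_le_norm [IsProbabilityMeasure μ] (f : Lp E 2 μ) :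
    ∫ a, ‖f a‖ ∂μ ≤ ‖f‖ := by
  have := integral_mul_norm_le_Lp_mul_Lq Real.HolderConjugate.two_two
    (by simpa using (Lp.memLp f).norm) (by simpa using memLp_const (μ := μ) (p := 2) (1 : ℝ))
  simpa [norm_two_eq_integral f] using this

end MeasureTheory.Lp

section LevyExponent

variable {ν : Measure ℝ}

def levyIntegrand (w z : ℝ) : ℂ := exp (I * w * z) - 1 - I * w * z

lemma hasDerivAt_levyIntegrand (w z : ℝ) :
    HasDerivAt (levyIntegrand · z) (I * z * (exp (I * w * z) - 1)) w := by
  have h : HasDerivAt (fun t : ℝ => I * (t : ℂ) * z) (I * z) w := by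
    simpa using ((hasDerivAt_id (w : ℂ)).comp_ofReal).const_mul I |>.mul_const (z : ℂ)
  exact ((h.cexp.sub_const 1).sub h).congr_deriv (by ring)

lemma norm_levyIntegrand_sub_le (a b z : ℝ) :
    ‖levyIntegrand a z - levyIntegrand b z‖ ≤ z ^ 2 * (|a| + |b|) * |a - b| := by
  have hderiv : ∀ t ∈ Metric.closedBall (0 : ℝ) (|a| + |b|),
      ‖I * z * (exp (I * t * z) - 1)‖ ≤ z ^ 2 * (|a| + |b|) := by
    intro t ht
    rw [mem_closedBall_zero_iff, Real.norm_eq_abs] at ht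
    have hexp : ‖exp (I * t * z) - 1‖ ≤ |t * z| := by
      simpa [mul_assoc] using Real.norm_exp_I_mul_ofReal_sub_one_le (x := t * z)
    calc ‖I * z * (exp (I * t * z) - 1)‖ ≤ |z| * |t * z| := by
          rw [norm_mul, norm_mul, norm_I, one_mul, norm_real, Real.norm_eq_abs]
          gcongr
      _ = z ^ 2 * |t| := by rw [abs_mul, ← sq_abs z]; ring
      _ ≤ z ^ 2 * (|a| + |b|) := by gcongr
  have := (convex_closedBall (0 : ℝ) (|a| + |b|)).norm_image_sub_le_of_norm_hasDerivWithin_le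
    (fun t _ => (hasDerivAt_levyIntegrand t z).hasDerivWithinAt) hderiv
    (x := b) (y := a) (by simp) (by simp)
  simpa [Real.norm_eq_abs] using this

lemma levyIntegrand_zero (z : ℝ) : levyIntegrand 0 z = 0 := by simp [levyIntegrand]

lemma norm_levyIntegrand_le (w z : ℝ) : ‖levyIntegrand w z‖ ≤ z ^ 2 * w ^ 2 := by
  calc ‖levyIntegrand w z‖ = ‖levyIntegrand w z - levyIntegrand 0 z‖ := by
        rw [levyIntegrand_zero, sub_zero]
    _ ≤ z ^ 2 * (|w| + |0|) * |w - 0| := norm_levyIntegrand_sub_le w 0 z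
    _ = z ^ 2 * w ^ 2 := by simp [mul_assoc, ← sq]

lemma continuous_levyIntegrand (w : ℝ) : Continuous (levyIntegrand w) := by
  unfold levyIntegrand; fun_prop

lemma integrable_levyIntegrand (hM : Integrable (fun z : ℝ => z ^ 2) ν) (w : ℝ) :
    Integrable (levyIntegrand w) ν :=
  (hM.mul_const (w ^ 2)).mono' (continuous_levyIntegrand w).aestronglyMeasurable
    (.of_forall (norm_levyIntegrand_le w))

lemma levyExponent_eq_integral (w : ℝ) : levyExponent ν w = ∫ z, levyIntegrand w z ∂ν := rfl

lemma levyExponent_zero : levyExponent ν 0 = 0 := by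
  simp [levyExponent_eq_integral, levyIntegrand_zero]

lemma norm_levyExponent_sub_le (hM : Integrable (fun z : ℝ => z ^ 2) ν) (a b : ℝ) :
    ‖levyExponent ν a - levyExponent ν b‖ ≤ (∫ z, z ^ 2 ∂ν) * (|a| + |b|) * |a - b| := by
  rw [levyExponent_eq_integral, levyExponent_eq_integral,
    ← integral_sub (integrable_levyIntegrand hM a) (integrable_levyIntegrand hM b),
    mul_assoc, ← integral_mul_const]
  exact norm_integral_le_of_norm_le (hM.mul_const _)
    (.of_forall fun z => (norm_levyIntegrand_sub_le a b z).trans_eq (mul_assoc _ _ _))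

lemma norm_levyExponent_le (hM : Integrable (fun z : ℝ => z ^ 2) ν) (w : ℝ) :
    ‖levyExponent ν w‖ ≤ (∫ z, z ^ 2 ∂ν) * w ^ 2 := by
  calc ‖levyExponent ν w‖ = ‖levyExponent ν w - levyExponent ν 0‖ := by
        rw [levyExponent_zero, sub_zero]
    _ ≤ (∫ z, z ^ 2 ∂ν) * (|w| + |0|) * |w - 0| := norm_levyExponent_sub_le hM w 0
    _ = (∫ z, z ^ 2 ∂ν) * w ^ 2 := by simp [mul_assoc, ← sq]

lemma continuous_levyExponent (hM : Integrable (fun z : ℝ => z ^ 2) ν) :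
    Continuous (levyExponent ν) :=
  continuous_of_norm_sub_le_mul_add_norm _ fun a b => by
    simpa only [Real.norm_eq_abs] using norm_levyExponent_sub_le hM a b

end LevyExponent

section Functionals

variable {α : Type*} [MeasurableSpace α] {μ : Measure α} {ν : Measure ℝ}

lemma integrable_levyExponent_comp (hM : Integrable (fun z : ℝ => z ^ 2) ν) (f : Lp ℝ 2 μ) :
    Integrable (fun a => levyExponent ν (f a)) μ :=
  ((Lp.memLp f).integrable_sq.const_mul _).mono'
    ((continuous_levyExponent hM).comp_aestronglyMeasurable (Lp.aestronglyMeasurable f))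
    (.of_forall fun a => norm_levyExponent_le hM (f a))

lemma norm_integral_levyExponent_sub_le (hM : Integrable (fun z : ℝ => z ^ 2) ν)
    (f g : Lp ℝ 2 μ) :
    ‖∫ a, levyExponent ν (f a) ∂μ - ∫ a, levyExponent ν (g a) ∂μ‖
      ≤ (∫ z, z ^ 2 ∂ν) * (‖f‖ + ‖g‖) * ‖f - g‖ := by
  have hprod : ∀ h : Lp ℝ 2 μ, Integrable (fun a => ‖h a‖ * ‖(f - g) a‖) μ := fun h =>
    (Lp.memLp h).norm.integrable_mul (Lp.memLp (f - g)).norm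
  rw [← integral_sub (integrable_levyExponent_comp hM f) (integrable_levyExponent_comp hM g)]
  calc _ ≤ ∫ a, (∫ z, z ^ 2 ∂ν) * (‖f a‖ * ‖(f - g) a‖ + ‖g a‖ * ‖(f - g) a‖) ∂μ := by
        refine norm_integral_le_of_norm_le (((hprod f).add (hprod g)).const_mul _) ?_
        filter_upwards [Lp.coeFn_sub f g] with a hfg
        rw [hfg, Pi.sub_apply]
        simpa [Real.norm_eq_abs, mul_assoc, add_mul] using norm_levyExponent_sub_le hM (f a) (g a)
    _ = (∫ z, z ^ 2 ∂ν) * (∫ a, ‖f a‖ * ‖(f - g) a‖ ∂μ + ∫ a, ‖g a‖ * ‖(f - g) a‖ ∂μ) := by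
        rw [integral_const_mul, integral_add (hprod f) (hprod g)]
    _ ≤ (∫ z, z ^ 2 ∂ν) * (‖f‖ * ‖f - g‖ + ‖g‖ * ‖f - g‖) := by
        have hM0 : 0 ≤ ∫ z, z ^ 2 ∂ν := integral_nonneg fun z => sq_nonneg z
        gcongr <;> exact Lp.integral_norm_mul_norm_le _ _
    _ = _ := by ring

lemma continuous_integral_levyExponent (hM : Integrable (fun z : ℝ => z ^ 2) ν) :
    Continuous fun f : Lp ℝ 2 μ => ∫ a, levyExponent ν (f a) ∂μ :=
  continuous_of_norm_sub_le_mul_add_norm _ (norm_integral_levyExponent_sub_le hM)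

lemma lipschitzWith_integral_exp_I_mul [IsProbabilityMeasure μ] (u : ℝ) :
    LipschitzWith ‖u‖₊ fun f : Lp ℝ 2 μ => ∫ a, exp (I * u * f a) ∂μ := by
  refine LipschitzWith.of_dist_le_mul fun f g => ?_
  have hexp : ∀ h : Lp ℝ 2 μ, Integrable (fun a => exp (I * u * h a)) μ := fun h => by
    simpa only [← ofReal_mul, mul_assoc] using
      integrable_exp_I_mul ((Lp.aestronglyMeasurable h).const_mul u)
  rw [dist_eq_norm, dist_eq_norm, ← integral_sub (hexp f) (hexp g), coe_nnnorm,
    Real.norm_eq_abs]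
  calc _ ≤ ∫ a, |u| * ‖(f - g) a‖ ∂μ := by
        refine norm_integral_le_of_norm_le
          (((Lp.memLp (f - g)).integrable one_le_two).norm.const_mul _) ?_
        filter_upwards [Lp.coeFn_sub f g] with a hfg
        rw [hfg, Pi.sub_apply, Real.norm_eq_abs, ← abs_mul, mul_sub, mul_assoc, mul_assoc,
          ← ofReal_mul, ← ofReal_mul]
        exact norm_exp_I_mul_sub_exp_I_mul_le _ _
    _ ≤ |u| * ‖f - g‖ := by
        rw [integral_const_mul]
        exact mul_le_mul_of_nonneg_left (Lp.integral_norm_le_norm _) (abs_nonneg u)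

lemma integral_levyExponent_smul_of_ae_eq_indicator {s : Set α} (hs : MeasurableSet s)
    {χ : Lp ℝ 2 μ} (hχ : χ =ᵐ[μ] s.indicator fun _ => (1 : ℝ)) (u : ℝ) :
    ∫ a, levyExponent ν ((u • χ) a) ∂μ = μ.real s • levyExponent ν u := by
  rw [← integral_indicator_const _ hs]
  refine integral_congr_ae ?_
  filter_upwards [Lp.coeFn_smul u χ, hχ] with a hsmul hind
  rw [hsmul, Pi.smul_apply, hind]
  by_cases ha : a ∈ s <;> simp [ha, levyExponent_zero]

end Functionals

section Box

variable {n : ℕ}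

lemma box_eq_preimage_Icc (x : Fin n → ℝ) :
    {y : En n | ∀ j, 0 ≤ y j ∧ y j ≤ x j} = WithLp.ofLp ⁻¹' Set.Icc 0 x := by
  ext y
  simp [Pi.le_def, forall_and]

lemma measurableSet_box (x : Fin n → ℝ) :
    MeasurableSet {y : En n | ∀ j, 0 ≤ y j ∧ y j ≤ x j} := by
  rw [box_eq_preimage_Icc]
  exact (PiLp.volume_preserving_ofLp (Fin n)).measurable measurableSet_Icc

lemma volume_real_box {x : Fin n → ℝ} (hx : ∀ j, 0 ≤ x j) :
    volume.real {y : En n | ∀ j, 0 ≤ y j ∧ y j ≤ x j} = ∏ j, x j := by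
  rw [measureReal_def, box_eq_preimage_Icc, (PiLp.volume_preserving_ofLp (Fin n)).measure_preimage
    measurableSet_Icc.nullMeasurableSet, Real.volume_Icc_pi, ENNReal.toReal_prod]
  simp [hx]

end Box

theorem levy_sheet_characteristic_function_general
    (n : ℕ)
    (ν : Measure ℝ)
    (hM : Integrable (fun z : ℝ => z ^ 2) ν)
    (P : Measure (WNSpace n)) [IsProbabilityMeasure P]
    (hBM : ∀ φ : SchwartzMap (En n) ℝ,
      ∫ ω : WNSpace n, Complex.exp (Complex.I * (ω φ : ℝ)) ∂P
        = Complex.exp (∫ x : En n, levyExponent ν (φ x)))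
    -- T : L²(ℝⁿ) → L²(Ω,P) is the continuous linear extension of φ ↦ ⟨·,φ⟩ :
    (T : Lp ℝ 2 (volume : Measure (En n)) →L[ℝ] Lp ℝ 2 P)
    (hT : ∀ (φ : SchwartzMap (En n) ℝ) (g : Lp ℝ 2 (volume : Measure (En n))),
      (⇑g =ᵐ[volume] fun x => φ x) → (⇑(T g) =ᵐ[P] fun ω : WNSpace n => ω φ))
    -- x ∈ ℝ₊ⁿ and χ = (the L²-class of) the indicator of ∏_{j=1}^n [0, x_j],
    -- so that L̃(x) = T χ :
    (x : Fin n → ℝ) (hx : ∀ j, 0 ≤ x j)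
    (χ : Lp ℝ 2 (volume : Measure (En n)))
    (hχ : ⇑χ =ᵐ[volume]
      Set.indicator {y : En n | ∀ j, 0 ≤ y j ∧ y j ≤ x j} (fun _ => (1 : ℝ))) :
    ∀ u : ℝ,
      ∫ ω : WNSpace n, Complex.exp (Complex.I * u * (T χ ω : ℝ)) ∂P
        = Complex.exp ((∏ j, x j) *
            ∫ z : ℝ, (Complex.exp (Complex.I * u * z) - 1 - Complex.I * u * z) ∂ν) := by
  intro u
  have hagree : (fun f => ∫ ω, exp (I * u * (T f ω : ℝ)) ∂P)
      = fun f => exp (∫ y, levyExponent ν ((u • f) y)) := by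
    refine (SchwartzMap.denseRange_toLpCLM (p := 2) ENNReal.ofNat_ne_top).equalizer
      ((lipschitzWith_integral_exp_I_mul u).continuous.comp T.continuous)
      (continuous_exp.comp ((continuous_integral_levyExponent hM).comp (continuous_const_smul u)))
      (funext fun φ => ?_)
    simp only [Function.comp_apply, SchwartzMap.toLpCLM_apply]
    have h1 : ⇑(φ.toLp 2 volume) =ᵐ[volume] fun y => φ y := φ.coeFn_toLp 2
    calc ∫ ω, exp (I * u * (T (φ.toLp 2 volume) ω : ℝ)) ∂P
        = ∫ ω, exp (I * (ω (u • φ) : ℝ)) ∂P := by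
          refine integral_congr_ae ?_
          filter_upwards [hT φ _ h1] with ω hω
          simp [hω, mul_assoc]
      _ = exp (∫ y, levyExponent ν ((u • φ) y)) := hBM (u • φ)
      _ = exp (∫ y, levyExponent ν ((u • φ.toLp 2 volume) y)) := by
          congr 1
          refine integral_congr_ae ?_
          filter_upwards [Lp.coeFn_smul u (φ.toLp 2 volume), h1] with y hsmul hφ
          simp [hsmul, hφ]
  rw [congrFun hagree χ, integral_levyExponent_smul_of_ae_eq_indicator (measurableSet_box x) hχ,
    volume_real_box hx, real_smul]
  rfl

theorem levy_sheet_characteristic_function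
    (n : ℕ) (hn : 1 ≤ n)
    (ν : Measure ℝ) (hν0 : ν {0} = 0)
    (hM : Integrable (fun z : ℝ => z ^ 2) ν)
    (M : ℝ) (hMdef : M = ∫ z : ℝ, z ^ 2 ∂ν)
    (P : Measure (WNSpace n)) [IsProbabilityMeasure P]
    (hBM : ∀ φ : SchwartzMap (En n) ℝ,
      ∫ ω : WNSpace n, Complex.exp (Complex.I * (ω φ : ℝ)) ∂P
        = Complex.exp (∫ x : En n, levyExponent ν (φ x)))
    -- T : L²(ℝⁿ) → L²(Ω,P) is the continuous linear extension of φ ↦ ⟨·,φ⟩ :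
    (T : Lp ℝ 2 (volume : Measure (En n)) →L[ℝ] Lp ℝ 2 P)
    (hT : ∀ (φ : SchwartzMap (En n) ℝ) (g : Lp ℝ 2 (volume : Measure (En n))),
      (⇑g =ᵐ[volume] fun x => φ x) → (⇑(T g) =ᵐ[P] fun ω : WNSpace n => ω φ))
    (hTiso : ∀ f : Lp ℝ 2 (volume : Measure (En n)), ‖T f‖ ^ 2 = M * ‖f‖ ^ 2)
    -- x ∈ ℝ₊ⁿ and χ = (the L²-class of) the indicator of ∏_{j=1}^n [0, x_j],
    -- so that L̃(x) = T χ :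
    (x : Fin n → ℝ) (hx : ∀ j, 0 ≤ x j)
    (χ : Lp ℝ 2 (volume : Measure (En n)))
    (hχ : ⇑χ =ᵐ[volume]
      Set.indicator {y : En n | ∀ j, 0 ≤ y j ∧ y j ≤ x j} (fun _ => (1 : ℝ))) :
    ∀ u : ℝ,
      ∫ ω : WNSpace n, Complex.exp (Complex.I * u * (T χ ω : ℝ)) ∂P
        = Complex.exp ((∏ j, x j) *
            ∫ z : ℝ, (Complex.exp (Complex.I * u * z) - 1 - Complex.I * u * z) ∂ν) :=
  levy_sheet_characteristic_function_general n ν hM P hBM T hT x hx χ hχ
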